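/- Suppose Assumptions (A1) and (A2) hold. Then there exists a constant C > 0, depending only on g, V and d (not on ε or on the solution), such that for every ε > 0 and every classical solution (u, m) of the discounted MFG system one has ∫_{T^d} m^{β+2} dx ≤ C, where β is the exponent from Assumption (A2). -/

import Mathlib

open MeasureTheory Set

noncomputable def pd (d : ℕ) (i : Fin d) (f : (Fin d → ℝ) → ℝ) : (Fin d → ℝ) → ℝ :=
  fun x => fderiv ℝ f x (Pi.single i 1)

noncomputable def gradSq (d : ℕ) (u : (Fin d → ℝ) → ℝ) (x : Fin d → ℝ) : ℝ :=
  ∑ i, pd d i u x ^ 2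

noncomputable def divUp (d : ℕ) (m u : (Fin d → ℝ) → ℝ) (x : Fin d → ℝ) : ℝ :=
  ∑ i, pd d i (fun y => m y * pd d i u y) x

/-- `f` is `ℤ^d`-periodic, i.e. a function on the flat torus `T^d`. -/
def ZPer (d : ℕ) (f : (Fin d → ℝ) → ℝ) : Prop :=
  ∀ (x : Fin d → ℝ) (k : Fin d → ℤ), f (x + fun i => (k i : ℝ)) = f x

/-- `f` has finite `α`-Hölder seminorm. -/
def HolderSemi (α : ℝ) {E : Type*} [PseudoMetricSpace E] (f : E → ℝ) : Prop :=
  ∃ C : ℝ, 0 ≤ C ∧ ∀ x y, |f x - f y| ≤ C * dist x y ^ α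

/-- `f` is of class `C^{1,α}`. -/
def C1Hold (d : ℕ) (α : ℝ) (f : (Fin d → ℝ) → ℝ) : Prop :=
  ContDiff ℝ 1 f ∧ ∀ i, HolderSemi α (pd d i f)

/-- `f` is of class `C^{2,α}`. -/
def C2Hold (d : ℕ) (α : ℝ) (f : (Fin d → ℝ) → ℝ) : Prop :=
  ContDiff ℝ 2 f ∧ ∀ i j, HolderSemi α (pd d i (pd d j f))

/-- `f` is locally `α`-Hölder on `s`. -/
def LocHolderOn (α : ℝ) (f : ℝ → ℝ) (s : Set ℝ) : Prop :=
  ∀ K : Set ℝ, IsCompact K → K ⊆ s →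
    ∃ C : ℝ, 0 ≤ C ∧ ∀ x ∈ K, ∀ y ∈ K, |f x - f y| ≤ C * dist x y ^ α

/-- Standing hypotheses on `g`: strictly increasing and continuous on `[0,∞)`,
of class `C^{1,α}` on `(0,∞)`. -/
def Ghyp (α : ℝ) (g : ℝ → ℝ) : Prop :=
  StrictMonoOn g (Ici 0) ∧ ContinuousOn g (Ici 0) ∧
    DifferentiableOn ℝ g (Ioi 0) ∧ LocHolderOn α (deriv g) (Ioi 0)

/-- Standing hypotheses on `V`: a `C^{1,α}` function on the torus. -/
def Vhyp (d : ℕ) (α : ℝ) (V : (Fin d → ℝ) → ℝ) : Prop :=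
  ZPer d V ∧ C1Hold d α V

/-- The oscillation of `V` over the torus. -/
noncomputable def oscV (d : ℕ) (V : (Fin d → ℝ) → ℝ) : ℝ :=
  sSup (V '' Icc (0 : Fin d → ℝ) 1) - sInf (V '' Icc (0 : Fin d → ℝ) 1)

/-- Assumption (A1): `g⁻¹(g(1) − osc V) > 0`, i.e. `g(1) − osc V` is attained by `g` on `(0,∞)`. -/
def A1 (d : ℕ) (g : ℝ → ℝ) (V : (Fin d → ℝ) → ℝ) : Prop :=
  g 1 - oscV d V ∈ g '' Ioi (0 : ℝ)

/-- Assumption (A2). -/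
def A2 (g : ℝ → ℝ) : Prop :=
  ∃ C₁ C₂ β : ℝ, 0 < C₁ ∧ 0 < C₂ ∧
    (∀ z : ℝ, 0 < z → C₁ * z ^ β ≤ deriv g z) ∧
    (∀ z : ℝ, 0 ≤ z → g z ≤ C₂ + z * g z)

/-- A classical solution `(u, m)` of the discounted MFG system
`ε u + |Du|²/2 + V = g(m)`, `ε m − div(m Du) = ε` on `T^d`. -/
structure DiscSol (d : ℕ) (α : ℝ) (g : ℝ → ℝ) (V : (Fin d → ℝ) → ℝ) (ε : ℝ)
    (u m : (Fin d → ℝ) → ℝ) : Prop where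
  per_u : ZPer d u
  per_m : ZPer d m
  reg_u : C2Hold d α u
  reg_m : C1Hold d α m
  m_nonneg : ∀ x, 0 ≤ m x
  hj : ∀ x, ε * u x + (1 / 2) * gradSq d u x + V x = g (m x)
  fp : ∀ x, ε * m x - divUp d m u x = ε

/-- A classical solution `(u, m, H̄)` of the ergodic MFG system
`|Du|²/2 + V = g(m) + H̄`, `−div(m Du) = 0`, `m ≥ 0`, `∫ m = 1` on `T^d`. -/
structure ErgSol (d : ℕ) (α : ℝ) (g : ℝ → ℝ) (V : (Fin d → ℝ) → ℝ)
    (u m : (Fin d → ℝ) → ℝ) (H : ℝ) : Prop where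
  per_u : ZPer d u
  per_m : ZPer d m
  reg_u : C2Hold d α u
  reg_m : C1Hold d α m
  m_nonneg : ∀ x, 0 ≤ m x
  m_mass : (∫ x in Icc (0 : Fin d → ℝ) 1, m x) = 1
  hj : ∀ x, (1 / 2) * gradSq d u x + V x = g (m x) + H
  fp : ∀ x, divUp d m u x = 0


/-!
Testing the Hamilton–Jacobi equation against `m - 1` gives, uniformly in `ε`,
`∫ (g(m) - g(1)) (m - 1) ≤ osc V`: the Fokker–Planck equation turns the discount term into
`ε ∫ u (m - 1) = ∫ u div(m Du) = -∫ m |Du|²`, which absorbs the kinetic term, and its integral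
gives `∫ m = 1`, which controls `∫ V (m - 1)`. Away from `m ∈ [1/2, 2]` the mean value theorem
with `g' ≥ C₁ z^β` bounds the integrand from below by a multiple of `m^(β+2)`.
-/

section TorusCalculus

variable {d : ℕ}

instance isProbabilityMeasure_restrict_unitCube :
    IsProbabilityMeasure (volume.restrict (Icc (0 : Fin d → ℝ) 1)) :=
  ⟨by simp [Real.volume_Icc_pi]⟩

lemma continuous_pd {f : (Fin d → ℝ) → ℝ} (hf : ContDiff ℝ 1 f) (i : Fin d) :
    Continuous (pd d i f) :=
  (hf.continuous_fderiv one_ne_zero).clm_apply continuous_const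

lemma contDiff_pd {f : (Fin d → ℝ) → ℝ} (hf : ContDiff ℝ 2 f) (i : Fin d) :
    ContDiff ℝ 1 (pd d i f) :=
  (hf.fderiv_right (by norm_num)).clm_apply contDiff_const

lemma pd_mul {f g : (Fin d → ℝ) → ℝ} {x : Fin d → ℝ} (hf : DifferentiableAt ℝ f x)
    (hg : DifferentiableAt ℝ g x) (i : Fin d) :
    pd d i (fun y => f y * g y) x = pd d i f x * g x + f x * pd d i g x := by
  simp only [pd, fderiv_fun_mul hf hg, FunLike.coe_add, FunLike.coe_smul,
    Pi.add_apply, Pi.smul_apply, smul_eq_mul]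
  ring

lemma ZPer.mul {f g : (Fin d → ℝ) → ℝ} (hf : ZPer d f) (hg : ZPer d g) :
    ZPer d fun x => f x * g x :=
  fun x k => by simp only [hf x k, hg x k]

lemma ZPer.pd {f : (Fin d → ℝ) → ℝ} (hf : ZPer d f) (i : Fin d) : ZPer d (pd d i f) := by
  intro x k
  have htranslate : (fun y => f (y + fun j => (k j : ℝ))) = f := funext fun y => hf y k
  simp only [_root_.pd, ← fderiv_comp_add_right, htranslate]

lemma ZPer.apply_insertNth_one {n : ℕ} {f : (Fin (n + 1) → ℝ) → ℝ} (hf : ZPer (n + 1) f)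
    (i : Fin (n + 1)) (y : Fin n → ℝ) :
    f (i.insertNth 1 y) = f (i.insertNth 0 y) := by
  have hshift : i.insertNth (1 : ℝ) y
      = i.insertNth 0 y + fun j => ((Pi.single i 1 : Fin (n + 1) → ℤ) j : ℝ) := by
    funext j
    refine Fin.succAboveCases i ?_ (fun j' => ?_) j
    · simp
    · simp [Fin.succAbove_ne i j']
  rw [hshift, hf]

lemma continuous_sum_pd {F : Fin d → (Fin d → ℝ) → ℝ} (hF : ∀ i, ContDiff ℝ 1 (F i)) :
    Continuous fun x => ∑ i, pd d i (F i) x :=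
  continuous_finsetSum _ fun i _ => continuous_pd (hF i) i

/-- Divergence theorem on the unit cube: the fluxes through opposite faces cancel by
periodicity. -/
theorem integral_sum_pd_eq_zero {F : Fin d → (Fin d → ℝ) → ℝ} (hF : ∀ i, ContDiff ℝ 1 (F i))
    (hper : ∀ i, ZPer d (F i)) :
    ∫ x in Icc (0 : Fin d → ℝ) 1, ∑ i, pd d i (F i) x = 0 := by
  cases d with
  | zero => simp
  | succ n =>
    have hdiv := integral_divergence_of_hasFDerivAt_off_countable' 0 1 zero_le_one F
      (fun i x => fderiv ℝ (F i) x) ∅ countable_empty (fun i => (hF i).continuous.continuousOn)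
      (fun x _ i => ((hF i).differentiable one_ne_zero x).hasFDerivAt)
      ((continuous_sum_pd hF).integrableOn_Icc)
    simp only [pd, hdiv, Pi.one_apply, Pi.zero_apply, (hper _).apply_insertNth_one, sub_self,
      Finset.sum_const_zero]

end TorusCalculus

section Flux

variable {d : ℕ} {u m : (Fin d → ℝ) → ℝ}

lemma contDiff_flux (hu : ContDiff ℝ 2 u) (hm : ContDiff ℝ 1 m) (i : Fin d) :
    ContDiff ℝ 1 fun y => m y * pd d i u y :=
  hm.mul (contDiff_pd hu i)

lemma zPer_flux (hu : ZPer d u) (hm : ZPer d m) (i : Fin d) :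
    ZPer d fun y => m y * pd d i u y :=
  hm.mul (hu.pd i)

lemma integral_divUp_eq_zero (hu : ContDiff ℝ 2 u) (hm : ContDiff ℝ 1 m) (hu_per : ZPer d u)
    (hm_per : ZPer d m) :
    ∫ x in Icc (0 : Fin d → ℝ) 1, divUp d m u x = 0 :=
  integral_sum_pd_eq_zero (contDiff_flux hu hm) (zPer_flux hu_per hm_per)

lemma sum_pd_mul_flux (hu : ContDiff ℝ 2 u) (hm : ContDiff ℝ 1 m) (x : Fin d → ℝ) :
    ∑ i, pd d i (fun y => u y * (m y * pd d i u y)) x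
      = u x * divUp d m u x + m x * gradSq d u x := by
  have hu_diff := (hu.of_le one_le_two).differentiable one_ne_zero x
  simp only [pd_mul hu_diff ((contDiff_flux hu hm _).differentiable one_ne_zero x),
    Finset.sum_add_distrib, divUp, gradSq, Finset.mul_sum]
  rw [add_comm]
  congr 1
  exact Finset.sum_congr rfl fun i _ => by ring

theorem integral_mul_divUp_add_mul_gradSq (hu : ContDiff ℝ 2 u) (hm : ContDiff ℝ 1 m)
    (hu_per : ZPer d u) (hm_per : ZPer d m) :
    ∫ x in Icc (0 : Fin d → ℝ) 1, (u x * divUp d m u x + m x * gradSq d u x) = 0 := by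
  simp only [← sum_pd_mul_flux hu hm]
  exact integral_sum_pd_eq_zero (fun i => (hu.of_le one_le_two).mul (contDiff_flux hu hm i))
    (fun i => hu_per.mul (zPer_flux hu_per hm_per i))

lemma continuous_mul_divUp_add_mul_gradSq (hu : ContDiff ℝ 2 u) (hm : ContDiff ℝ 1 m) :
    Continuous fun x => u x * divUp d m u x + m x * gradSq d u x := by
  simp only [← sum_pd_mul_flux hu hm]
  exact continuous_sum_pd fun i => (hu.of_le one_le_two).mul (contDiff_flux hu hm i)

end Flux

section Oscillation

variable {d : ℕ} {V : (Fin d → ℝ) → ℝ}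

lemma csInf_le_apply_le_csSup (hV : Continuous V) {x : Fin d → ℝ} (hx : x ∈ Icc 0 1) :
    sInf (V '' Icc 0 1) ≤ V x ∧ V x ≤ sSup (V '' Icc 0 1) :=
  ⟨csInf_le (isCompact_Icc.image hV).bddBelow (mem_image_of_mem V hx),
    le_csSup (isCompact_Icc.image hV).bddAbove (mem_image_of_mem V hx)⟩

lemma oscV_nonneg (hV : Continuous V) : 0 ≤ oscV d V := by
  have h := csInf_le_apply_le_csSup hV (left_mem_Icc.mpr zero_le_one)
  rw [oscV]
  linarith [h.1, h.2]

end Oscillation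

namespace DiscSol

variable {d : ℕ} {α ε : ℝ} {g : ℝ → ℝ} {V u m : (Fin d → ℝ) → ℝ}

lemma divUp_eq (sol : DiscSol d α g V ε u m) (x : Fin d → ℝ) :
    divUp d m u x = ε * (m x - 1) := by
  linarith [sol.fp x]

lemma integral_eq_one (sol : DiscSol d α g V ε u m) (hε : ε ≠ 0) :
    ∫ x in Icc (0 : Fin d → ℝ) 1, m x = 1 := by
  have h := integral_divUp_eq_zero sol.reg_u.1 sol.reg_m.1 sol.per_u sol.per_m
  simp only [sol.divUp_eq, integral_const_mul, mul_eq_zero, hε, false_or] at h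
  rw [integral_sub (sol.reg_m.1.continuous.integrableOn_Icc) (integrable_const 1),
    integral_const, probReal_univ, one_smul, sub_eq_zero] at h
  exact h

theorem integral_sub_mul_sub_le_oscV (sol : DiscSol d α g V ε u m) (hε : ε ≠ 0)
    (hV : Continuous V) (hg : ContinuousOn g (Ici 0)) :
    ∫ x in Icc (0 : Fin d → ℝ) 1, (g (m x) - g 1) * (m x - 1) ≤ oscV d V := by
  set Vmin := sInf (V '' Icc 0 1)
  set Vmax := sSup (V '' Icc 0 1)
  have hu := sol.reg_u.1
  have hm := sol.reg_m.1
  have hpt : ∀ x ∈ Icc (0 : Fin d → ℝ) 1, (g (m x) - g 1) * (m x - 1)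
      ≤ (u x * divUp d m u x + m x * gradSq d u x) + ((Vmax - g 1) * m x + (g 1 - Vmin)) := by
    intro x hx
    obtain ⟨hmin, hmax⟩ := csInf_le_apply_le_csSup hV hx
    have hgrad : 0 ≤ gradSq d u x := Finset.sum_nonneg fun i _ => sq_nonneg _
    have hgap : (u x * divUp d m u x + m x * gradSq d u x) + ((Vmax - g 1) * m x + (g 1 - Vmin))
          - (g (m x) - g 1) * (m x - 1)
        = (m x + 1) / 2 * gradSq d u x + (Vmax - V x) * m x + (V x - Vmin) := by
      rw [sol.divUp_eq x, ← sol.hj x]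
      ring
    linarith [mul_nonneg (by linarith [sol.m_nonneg x] : 0 ≤ (m x + 1) / 2) hgrad,
      mul_nonneg (sub_nonneg.mpr hmax) (sol.m_nonneg x), sub_nonneg.mpr hmin]
  have hgm : Continuous fun x => g (m x) :=
    hg.comp_continuous hm.continuous fun x => sol.m_nonneg x
  have hflux : IntegrableOn (fun x => u x * divUp d m u x + m x * gradSq d u x)
      (Icc (0 : Fin d → ℝ) 1) :=
    (continuous_mul_divUp_add_mul_gradSq hu hm).integrableOn_Icc
  have hmass : IntegrableOn (fun x => (Vmax - g 1) * m x) (Icc (0 : Fin d → ℝ) 1) :=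
    (continuous_const.mul hm.continuous).integrableOn_Icc
  have hlin : IntegrableOn (fun x => (Vmax - g 1) * m x + (g 1 - Vmin)) (Icc (0 : Fin d → ℝ) 1) :=
    hmass.add (integrable_const _)
  calc ∫ x in Icc (0 : Fin d → ℝ) 1, (g (m x) - g 1) * (m x - 1)
      ≤ ∫ x in Icc (0 : Fin d → ℝ) 1,
          (u x * divUp d m u x + m x * gradSq d u x) + ((Vmax - g 1) * m x + (g 1 - Vmin)) :=
        setIntegral_mono_on
          ((hgm.sub continuous_const).mul (hm.continuous.sub continuous_const)).integrableOn_Icc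
          (hflux.add hlin) measurableSet_Icc hpt
    _ = oscV d V := by
        rw [integral_add hflux hlin,
          integral_mul_divUp_add_mul_gradSq hu hm sol.per_u sol.per_m,
          integral_add hmass (integrable_const _), integral_const_mul, sol.integral_eq_one hε,
          integral_const, probReal_univ, one_smul, oscV]
        ring

end DiscSol

section PowerBound

open Real

lemma rpow_le_two_rpow_abs {x : ℝ} (hx : x ∈ Icc (1 / 2) 2) (γ : ℝ) : x ^ γ ≤ 2 ^ |γ| := by
  have hx0 : 0 < x := by linarith [hx.1]
  have hlog : |log x| ≤ log 2 := by
    refine abs_le.mpr ⟨?_, log_le_log hx0 hx.2⟩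
    rw [← log_inv, ← one_div]
    exact log_le_log (by norm_num) hx.1
  rw [rpow_def_of_pos hx0, rpow_def_of_pos two_pos, exp_le_exp]
  calc log x * γ ≤ |log x * γ| := le_abs_self _
    _ = |log x| * |γ| := abs_mul _ _
    _ ≤ log 2 * |γ| := mul_le_mul_of_nonneg_right hlog (abs_nonneg γ)

variable {g : ℝ → ℝ} {C₁ β : ℝ}

/-- Mean value theorem on `[s, 2s]`; the factor `2 ^ |β|` compares the weight `c ^ β` at the
intermediate point with `r ^ β`. -/
lemma mul_rpow_mul_le_sub (hg : ContinuousOn g (Ici 0)) (hg' : DifferentiableOn ℝ g (Ioi 0))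
    (hC₁ : 0 ≤ C₁) (hderiv : ∀ z, 0 < z → C₁ * z ^ β ≤ deriv g z) {s r : ℝ} (hs : 0 < s)
    (hr : r ∈ Icc s (2 * s)) :
    C₁ * r ^ β * s ≤ 2 ^ |β| * (g (2 * s) - g s) := by
  obtain ⟨c, hc, hslope⟩ := exists_hasDerivAt_eq_slope g (deriv g) (by linarith : s < 2 * s)
    (hg.mono fun y hy => le_trans hs.le hy.1)
    fun y hy => (hg'.differentiableAt (Ioi_mem_nhds (hs.trans hy.1))).hasDerivAt
  have hc0 : 0 < c := hs.trans hc.1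
  have hratio : r / c ∈ Icc (1 / 2) 2 := by
    constructor
    · rw [le_div_iff₀ hc0]; linarith [hr.1, hc.2]
    · rw [div_le_iff₀ hc0]; linarith [hr.2, hc.1]
  have hrc : r ^ β ≤ 2 ^ |β| * c ^ β := by
    calc r ^ β = (r / c) ^ β * c ^ β := by
          rw [div_rpow (by linarith [hr.1]) hc0.le, div_mul_cancel₀ _ (rpow_pos_of_pos hc0 β).ne']
      _ ≤ 2 ^ |β| * c ^ β :=
          mul_le_mul_of_nonneg_right (rpow_le_two_rpow_abs hratio β) (rpow_pos_of_pos hc0 β).le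
  have hincr : deriv g c * s = g (2 * s) - g s := by
    rw [hslope, show 2 * s - s = s by ring, div_mul_cancel₀ _ hs.ne']
  calc C₁ * r ^ β * s ≤ C₁ * (2 ^ |β| * c ^ β) * s := by gcongr
    _ = 2 ^ |β| * (C₁ * c ^ β) * s := by ring
    _ ≤ 2 ^ |β| * deriv g c * s := by gcongr; exact hderiv c hc0
    _ = 2 ^ |β| * (g (2 * s) - g s) := by rw [mul_assoc, hincr]

lemma sub_mul_sub_nonneg (hmono : MonotoneOn g (Ici 0)) {t : ℝ} (ht : 0 ≤ t) :
    0 ≤ (g t - g 1) * (t - 1) := by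
  rcases le_total 1 t with h | h
  · exact mul_nonneg (sub_nonneg.mpr (hmono (by simp) (mem_Ici.mpr ht) h)) (by linarith)
  · exact mul_nonneg_of_nonpos_of_nonpos (sub_nonpos.mpr (hmono (mem_Ici.mpr ht) (by simp) h))
      (by linarith)

variable (hmono : MonotoneOn g (Ici 0)) (hg : ContinuousOn g (Ici 0))
  (hg' : DifferentiableOn ℝ g (Ioi 0)) (hderiv : ∀ z, 0 < z → C₁ * z ^ β ≤ deriv g z)
include hmono hg hg' hderiv

lemma mul_rpow_add_two_le_of_tail (hC₁ : 0 ≤ C₁) {t : ℝ} (ht : 0 < t)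
    (htail : t ≤ 1 / 2 ∨ 2 ≤ t) :
    C₁ * t ^ (β + 2) ≤ 4 * 2 ^ |β| * ((g t - g 1) * (t - 1)) := by
  have hpow : C₁ * t ^ (β + 2) = C₁ * t ^ β * t * t := by rw [rpow_add ht, rpow_two]; ring
  have hweight : 0 ≤ C₁ * t ^ β := mul_nonneg hC₁ (rpow_pos_of_pos ht β).le
  have h2β : (0 : ℝ) ≤ 2 ^ |β| := by positivity
  rcases htail with hsmall | hbig
  · have hincr := mul_rpow_mul_le_sub hg hg' hC₁ hderiv ht (r := t) ⟨le_rfl, by linarith⟩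
    have hg2t : g (2 * t) ≤ g 1 := hmono (mem_Ici.mpr (by linarith)) (by simp) (by linarith)
    have hstep : C₁ * t ^ β * t ≤ 2 ^ |β| * (g 1 - g t) :=
      hincr.trans (mul_le_mul_of_nonneg_left (by linarith) h2β)
    calc C₁ * t ^ (β + 2) = C₁ * t ^ β * t * t := hpow
      _ ≤ 2 ^ |β| * (g 1 - g t) * (1 - t) :=
          mul_le_mul hstep (by linarith) ht.le ((mul_nonneg hweight ht.le).trans hstep)
      _ = 2 ^ |β| * ((g t - g 1) * (t - 1)) := by ring
      _ ≤ 4 * 2 ^ |β| * ((g t - g 1) * (t - 1)) :=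
          mul_le_mul_of_nonneg_right (by linarith) (sub_mul_sub_nonneg hmono ht.le)
  · have hincr := mul_rpow_mul_le_sub hg hg' hC₁ hderiv (half_pos ht) (r := t)
      ⟨by linarith, by linarith⟩
    rw [mul_div_cancel₀ t two_ne_zero] at hincr
    have hg1 : g 1 ≤ g (t / 2) := hmono (by simp) (mem_Ici.mpr (by linarith)) (by linarith)
    have hstep : C₁ * t ^ β * (t / 2) ≤ 2 ^ |β| * (g t - g 1) :=
      hincr.trans (mul_le_mul_of_nonneg_left (by linarith) h2β)
    calc C₁ * t ^ (β + 2) = 4 * (C₁ * t ^ β * (t / 2) * (t / 2)) := by rw [hpow]; ring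
      _ ≤ 4 * (2 ^ |β| * (g t - g 1) * (t - 1)) :=
          mul_le_mul_of_nonneg_left (mul_le_mul hstep (by linarith) (by linarith)
            ((mul_nonneg hweight (by linarith)).trans hstep)) (by norm_num)
      _ = 4 * 2 ^ |β| * ((g t - g 1) * (t - 1)) := by ring

lemma rpow_add_two_le (hC₁ : 0 < C₁) {t : ℝ} (ht : 0 ≤ t) :
    t ^ (β + 2) ≤ 2 ^ |β + 2| + 4 * 2 ^ |β| / C₁ * ((g t - g 1) * (t - 1)) := by
  have hφ : 0 ≤ 4 * 2 ^ |β| / C₁ * ((g t - g 1) * (t - 1)) :=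
    mul_nonneg (by positivity) (sub_mul_sub_nonneg hmono ht)
  rcases ht.eq_or_lt with rfl | ht
  · linarith [zero_rpow_le_one (β + 2), one_le_rpow one_le_two (abs_nonneg (β + 2))]
  by_cases hmid : t ∈ Icc (1 / 2) 2
  · linarith [rpow_le_two_rpow_abs hmid (β + 2)]
  have htail : t ≤ 1 / 2 ∨ 2 ≤ t := by
    rw [mem_Icc, not_and_or, not_le, not_le] at hmid
    exact hmid.imp le_of_lt le_of_lt
  have htail_bound : t ^ (β + 2) ≤ 4 * 2 ^ |β| / C₁ * ((g t - g 1) * (t - 1)) := by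
    rw [div_mul_eq_mul_div, le_div_iff₀ hC₁, mul_comm]
    exact mul_rpow_add_two_le_of_tail hmono hg hg' hderiv hC₁.le ht htail
  linarith [rpow_pos_of_pos two_pos |β + 2|]

end PowerBound

theorem stmt2_general (d : ℕ) (α : ℝ)
    (g : ℝ → ℝ) (V : (Fin d → ℝ) → ℝ) (hg : Ghyp α g) (hV : Vhyp d α V)
    (C₁ β : ℝ) (hC₁ : 0 < C₁)
    (hA2a : ∀ z : ℝ, 0 < z → C₁ * z ^ β ≤ deriv g z) :
    ∃ C : ℝ, 0 < C ∧ ∀ ε : ℝ, 0 < ε → ∀ u m : (Fin d → ℝ) → ℝ,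
      DiscSol d α g V ε u m →
        (∫ x in Icc (0 : Fin d → ℝ) 1, m x ^ (β + 2)) ≤ C := by
  obtain ⟨hmono, hcont, hdiff, -⟩ := hg
  have hVc : Continuous V := hV.2.1.continuous
  set K := 4 * 2 ^ |β| / C₁
  refine ⟨2 ^ |β + 2| + K * oscV d V, by have := oscV_nonneg hVc; positivity, ?_⟩
  intro ε hε u m sol
  have hgm : Continuous fun x => (g (m x) - g 1) * (m x - 1) :=
    ((hcont.comp_continuous sol.reg_m.1.continuous sol.m_nonneg).sub continuous_const).mul
      (sol.reg_m.1.continuous.sub continuous_const)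
  have hKφ : IntegrableOn (fun x => K * ((g (m x) - g 1) * (m x - 1))) (Icc (0 : Fin d → ℝ) 1) :=
    (continuous_const.mul hgm).integrableOn_Icc
  calc ∫ x in Icc (0 : Fin d → ℝ) 1, m x ^ (β + 2)
      ≤ ∫ x in Icc (0 : Fin d → ℝ) 1, (2 ^ |β + 2| + K * ((g (m x) - g 1) * (m x - 1))) :=
        integral_mono_of_nonneg
          (Filter.Eventually.of_forall fun x => Real.rpow_nonneg (sol.m_nonneg x) _)
          ((integrable_const _).add hKφ)
          (Filter.Eventually.of_forall fun x =>
            rpow_add_two_le hmono.monotoneOn hcont hdiff hA2a hC₁ (sol.m_nonneg x))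
    _ = 2 ^ |β + 2| + K * ∫ x in Icc (0 : Fin d → ℝ) 1, (g (m x) - g 1) * (m x - 1) := by
        rw [integral_add (integrable_const _) hKφ,
          integral_const, probReal_univ, one_smul, integral_const_mul]
    _ ≤ 2 ^ |β + 2| + K * oscV d V := by
        gcongr
        exact sol.integral_sub_mul_sub_le_oscV hε.ne' hVc hcont

theorem stmt2 (d : ℕ) (α : ℝ) (hα0 : 0 < α) (hα1 : α < 1)
    (g : ℝ → ℝ) (V : (Fin d → ℝ) → ℝ) (hg : Ghyp α g) (hV : Vhyp d α V)
    (hA1 : A1 d g V)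
    (C₁ C₂ β : ℝ) (hC₁ : 0 < C₁) (hC₂ : 0 < C₂)
    (hA2a : ∀ z : ℝ, 0 < z → C₁ * z ^ β ≤ deriv g z)
    (hA2b : ∀ z : ℝ, 0 ≤ z → g z ≤ C₂ + z * g z) :
    ∃ C : ℝ, 0 < C ∧ ∀ ε : ℝ, 0 < ε → ∀ u m : (Fin d → ℝ) → ℝ,
      DiscSol d α g V ε u m →
        (∫ x in Icc (0 : Fin d → ℝ) 1, m x ^ (β + 2)) ≤ C :=
  stmt2_general d α g V hg hV C₁ β hC₁ hA2a
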